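/- arXiv:1504.01357 — 2 statements merged into one kernel-verified Lean document; each statement's English description precedes it below -/
import Mathlib

section
/- Let f, g : ℕ₀ → ℂ be finitely supported sequences and α > 0. Then ∑_{n=0}^∞ W^{-α}f(n)·g(n) = ∑_{n=0}^∞ f(n)·(k^α * g)(n) (all sums finite). Consequently, ∑_{n=0}^∞ f(n)·g(n) = ∑_{n=0}^∞ W^α f(n)·(k^α * g)(n) = ∑_{n=0}^∞ (k^α * f)(n)·W^α g(n). -/
/-- The Cesàro kernel `k^α(n) = Γ(n+α)/(Γ(α)·Γ(n+1))`. -/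
noncomputable def cesK (α : ℝ) (n : ℕ) : ℝ :=
  Real.Gamma ((n : ℝ) + α) / (Real.Gamma α * Real.Gamma ((n : ℝ) + 1))

/-- The Weyl sum of order `α`: `W^{-α}f(n) = ∑_{j=n}^∞ k^α(j-n)·f(j)`. -/
noncomputable def weylSum {X : Type*} [AddCommMonoid X] [Module ℝ X] (α : ℝ) (f : ℕ → X) :
    ℕ → X :=
  fun n => ∑ᶠ j : ℕ, cesK α j • f (j + n)

/-- The forward difference operator `Δh(n) = h(n+1) - h(n)`. -/
def fdiff {X : Type*} [AddCommGroup X] (f : ℕ → X) : ℕ → X := fun n => f (n + 1) - f n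

/-- The Weyl difference of order `α > 0`:
`W^α f(n) = (-1)^m Δ^m W^{-(m-α)} f(n)` with `m = [α]+1`; and `W^0 f = f`. -/
noncomputable def weylDiff {X : Type*} [AddCommGroup X] [Module ℝ X] (α : ℝ) (f : ℕ → X) :
    ℕ → X :=
  if α = 0 then f
  else ((-1 : ℝ) ^ (⌊α⌋₊ + 1)) • fdiff^[⌊α⌋₊ + 1] (weylSum ((⌊α⌋₊ : ℝ) + 1 - α) f)

/-- The Cesàro sum of order `α` of a complex sequence:
`Δ^{-α}g(n) = (k^α * g)(n) = ∑_{j=0}^n k^α(n-j)·g(j)`. -/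
noncomputable def cesConv (α : ℝ) (g : ℕ → ℂ) (n : ℕ) : ℂ :=
  ∑ j ∈ Finset.range (n + 1), (cesK α (n - j) : ℂ) * g j


open PowerSeries Finset

/-!
Identifying `k^α(n)` with `Ring.multichoose α n` makes `k^α * ·` multiplication by the binomial
series `multichooseSeries α = (1 - X)^(-α)`: then `k^β * k^α = k^(β + α)` is Chu–Vandermonde and the
backward difference is multiplication by `1 - X`. The first identity is an exchange of the order of
a finite double sum. For the second, put `m = ⌊α⌋ + 1` and `β = m - α`: summing by parts `m` times
moves `(-Δ)^m` off `W^(-β) f` onto `k^α * g` as the factor `(1 - X)^m`, the first identity turns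
`W^(-β)` into `k^β * ·`, and `(1 - X)^m (1 - X)^(-β) (1 - X)^(-α) = 1`. The third identity is the
second with `f` and `g` exchanged.
-/

theorem PowerSeries.mk_coeff {R : Type*} [Semiring R] (φ : R⟦X⟧) :
    PowerSeries.mk (fun n => coeff n φ) = φ :=
  ext fun n => coeff_mk n _

section Multichoose

variable {R : Type*} [CommRing R] [BinomialRing R]

theorem multichoose_add (r s : R) (n : ℕ) :
    Ring.multichoose (r + s) n =
      ∑ ij ∈ antidiagonal n, Ring.multichoose r ij.1 * Ring.multichoose s ij.2 := by
  have h := Ring.add_choose_eq (r := -r) (s := -s) n (Commute.all _ _)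
  rw [← neg_add, Ring.choose_neg'] at h
  simp only [Ring.choose_neg', smul_mul_smul_comm] at h
  rw [sum_congr rfl fun ij hij => by
    rw [← Int.negOnePow_add, ← Nat.cast_add, mem_antidiagonal.mp hij], ← smul_sum] at h
  exact smul_left_cancel _ h

noncomputable def multichooseSeries (r : R) : R⟦X⟧ := PowerSeries.mk (Ring.multichoose r)

theorem multichooseSeries_add (r s : R) :
    multichooseSeries (r + s) = multichooseSeries r * multichooseSeries s := by
  ext n
  simp [multichooseSeries, coeff_mul, multichoose_add]

theorem multichooseSeries_zero : multichooseSeries (0 : R) = 1 := by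
  ext n
  cases n <;> simp [multichooseSeries, coeff_one]

theorem one_sub_X_mul_multichooseSeries_add_one (r : R) :
    (1 - X) * multichooseSeries (r + 1) = multichooseSeries r := by
  ext n
  cases n with
  | zero => simp [multichooseSeries]
  | succ n => simp [multichooseSeries, sub_mul, coeff_succ_X_mul, Ring.multichoose_succ_succ]

theorem one_sub_X_pow_mul_multichooseSeries_natCast (m : ℕ) :
    (1 - X) ^ m * multichooseSeries (m : R) = 1 := by
  induction m with
  | zero => simp [multichooseSeries_zero]
  | succ m ih =>
    rw [pow_succ, mul_assoc, Nat.cast_succ, one_sub_X_mul_multichooseSeries_add_one, ih]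

end Multichoose

theorem Real.Gamma_natCast_add_eq_ascPochhammer_mul {α : ℝ} (hα : 0 < α) (n : ℕ) :
    Real.Gamma (n + α) = (ascPochhammer ℝ n).eval α * Real.Gamma α := by
  induction n with
  | zero => simp
  | succ n ih =>
    rw [Nat.cast_succ, add_right_comm, Real.Gamma_add_one (by positivity), ih,
      ascPochhammer_succ_eval]
    ring

theorem cesK_eq_multichoose {α : ℝ} (hα : 0 < α) (n : ℕ) :
    cesK α n = Ring.multichoose α n := by
  have h := Ring.factorial_nsmul_multichoose_eq_ascPochhammer α n
  rw [Polynomial.ascPochhammer_smeval_eq_eval, nsmul_eq_mul] at h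
  rw [cesK, Real.Gamma_natCast_add_eq_ascPochhammer_mul hα, Real.Gamma_nat_eq_factorial, ← h]
  have := (Real.Gamma_pos_of_pos hα).ne'
  field_simp

theorem Complex.ofReal_multichoose (r : ℝ) (n : ℕ) :
    ((Ring.multichoose r n : ℝ) : ℂ) = Ring.multichoose (r : ℂ) n :=
  Ring.map_multichoose Complex.ofRealHom r n

theorem cesConv_eq_coeff {α : ℝ} (hα : 0 < α) (g : ℕ → ℂ) (n : ℕ) :
    cesConv α g n = coeff n (multichooseSeries (α : ℂ) * PowerSeries.mk g) := by
  rw [mul_comm, coeff_mul, Nat.sum_antidiagonal_eq_sum_range_succ_mk, cesConv]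
  refine sum_congr rfl fun j _ => ?_
  rw [multichooseSeries, coeff_mk, coeff_mk, cesK_eq_multichoose hα, Complex.ofReal_multichoose,
    mul_comm]

section EventuallyZero

variable {M : Type*} {N : ℕ}

theorem exists_forall_le_eq_zero [Zero M] {f : ℕ → M} (hf : f.support.Finite) :
    ∃ N, ∀ n, N ≤ n → f n = 0 := by
  obtain ⟨B, hB⟩ := hf.bddAbove
  exact ⟨B + 1, fun n hn => by_contra fun h => absurd (hB h) (by omega)⟩

theorem weylSum_eq_sum_Ico [AddCommMonoid M] [Module ℝ M] {f : ℕ → M}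
    (hf : ∀ n, N ≤ n → f n = 0) (γ : ℝ) (n : ℕ) :
    weylSum γ f n = ∑ m ∈ Ico n N, cesK γ (m - n) • f m := by
  rw [sum_Ico_eq_sum_range, weylSum, finsum_eq_finsetSum_of_support_subset (s := range (N - n))]
  · exact sum_congr rfl fun j _ => by rw [add_comm n j, Nat.add_sub_cancel]
  · intro j hj
    by_contra hjN
    exact hj (show cesK γ j • f (j + n) = 0 by rw [hf (j + n) (by simp at hjN; omega), smul_zero])

theorem weylSum_eq_zero_of_le [AddCommMonoid M] [Module ℝ M] {f : ℕ → M}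
    (hf : ∀ n, N ≤ n → f n = 0) (γ : ℝ) : ∀ n, N ≤ n → weylSum γ f n = 0 := fun n hn => by
  rw [weylSum_eq_sum_Ico hf, Ico_eq_empty_of_le hn, sum_empty]

theorem iterate_fdiff_eq_zero_of_le [AddCommGroup M] {F : ℕ → M}
    (hF : ∀ n, N ≤ n → F n = 0) (k : ℕ) : ∀ n, N ≤ n → fdiff^[k] F n = 0 := by
  induction k with
  | zero => exact hF
  | succ k ih =>
    intro n hn
    rw [Function.iterate_succ_apply', fdiff, ih n hn, ih (n + 1) (by omega), sub_zero]

theorem weylDiff_eq_zero_of_le [AddCommGroup M] [Module ℝ M] {f : ℕ → M}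
    (hf : ∀ n, N ≤ n → f n = 0) (α : ℝ) : ∀ n, N ≤ n → weylDiff α f n = 0 := fun n hn => by
  unfold weylDiff
  split_ifs
  · exact hf n hn
  · rw [Pi.smul_apply, iterate_fdiff_eq_zero_of_le (weylSum_eq_zero_of_le hf _) _ n hn, smul_zero]

theorem finsum_eq_sum_range_of_eq_zero [AddCommMonoid M] {u : ℕ → M}
    (hu : ∀ n, N ≤ n → u n = 0) : ∑ᶠ n, u n = ∑ n ∈ range N, u n :=
  finsum_eq_finsetSum_of_support_subset u fun n hn => by
    by_contra hnN
    exact hn (hu n (by simpa using hnN))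

theorem sum_range_weylSum_mul {f : ℕ → ℂ} (hf : ∀ n, N ≤ n → f n = 0) (γ : ℝ) (g : ℕ → ℂ) :
    ∑ n ∈ range N, weylSum γ f n * g n = ∑ n ∈ range N, f n * cesConv γ g n := by
  simp only [weylSum_eq_sum_Ico hf, cesConv, sum_mul, mul_sum, Complex.real_smul]
  refine sum_comm' (fun n m => ?_) |>.trans (sum_congr rfl fun m _ => sum_congr rfl fun n _ => ?_)
  · simp only [mem_range, mem_Ico]
    omega
  · ring

theorem sum_range_fdiff_mul_coeff {R : Type*} [CommRing R] {F : ℕ → R}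
    (hF : ∀ n, N ≤ n → F n = 0) (φ : R⟦X⟧) :
    ∑ n ∈ range N, fdiff F n * coeff n φ = -∑ n ∈ range N, F n * coeff n ((1 - X) * φ) := by
  have shift : ∑ n ∈ range N, F (n + 1) * coeff n φ = ∑ n ∈ range N, F n * coeff n (X * φ) := by
    have h := sum_range_succ' (fun n => F n * coeff n (X * φ)) N
    simp only [coeff_succ_X_mul, coeff_zero_X_mul, mul_zero, add_zero] at h
    rw [← h, sum_range_succ, hF N le_rfl, zero_mul, add_zero]
  simp only [fdiff, sub_mul, one_mul, map_sub, mul_sub, sum_sub_distrib, shift]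
  ring

theorem sum_range_iterate_fdiff_mul_coeff {R : Type*} [CommRing R] {F : ℕ → R}
    (hF : ∀ n, N ≤ n → F n = 0) (k : ℕ) (φ : R⟦X⟧) :
    ∑ n ∈ range N, fdiff^[k] F n * coeff n φ =
      (-1) ^ k * ∑ n ∈ range N, F n * coeff n ((1 - X) ^ k * φ) := by
  induction k generalizing φ with
  | zero => simp
  | succ k ih =>
    rw [Function.iterate_succ_apply',
      sum_range_fdiff_mul_coeff (iterate_fdiff_eq_zero_of_le hF k), ih, pow_succ, pow_succ,
      mul_assoc (_ ^ k) (1 - X)]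
    ring

theorem sum_range_weylDiff_mul_cesConv {f : ℕ → ℂ} (hf : ∀ n, N ≤ n → f n = 0) {α : ℝ}
    (hα : 0 < α) (g : ℕ → ℂ) :
    ∑ n ∈ range N, weylDiff α f n * cesConv α g n = ∑ n ∈ range N, f n * g n := by
  set m := ⌊α⌋₊ + 1
  set β : ℝ := ⌊α⌋₊ + 1 - α
  have hβ : 0 < β := by linarith [Nat.lt_floor_add_one α]
  have hβα : (β : ℂ) + α = m := by push_cast [β, m]; ring
  set ψ : ℂ⟦X⟧ := (1 - X) ^ m * (multichooseSeries (α : ℂ) * PowerSeries.mk g)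
  have hψ : multichooseSeries (β : ℂ) * ψ = PowerSeries.mk g := by
    rw [show multichooseSeries (β : ℂ) * ψ = (1 - X) ^ m * (multichooseSeries (β : ℂ) *
      multichooseSeries (α : ℂ)) * PowerSeries.mk g by ring, ← multichooseSeries_add, hβα,
      one_sub_X_pow_mul_multichooseSeries_natCast, one_mul]
  calc ∑ n ∈ range N, weylDiff α f n * cesConv α g n
      = (-1) ^ m * ∑ n ∈ range N, fdiff^[m] (weylSum β f) n *
          coeff n (multichooseSeries (α : ℂ) * PowerSeries.mk g) := by
        rw [mul_sum]
        refine sum_congr rfl fun n _ => ?_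
        rw [weylDiff, if_neg hα.ne', Pi.smul_apply, Complex.real_smul, cesConv_eq_coeff hα]
        push_cast
        ring
    _ = ∑ n ∈ range N, weylSum β f n * coeff n ψ := by
        rw [sum_range_iterate_fdiff_mul_coeff (weylSum_eq_zero_of_le hf β), ← mul_assoc,
          ← mul_pow, neg_one_mul, neg_neg, one_pow, one_mul]
    _ = ∑ n ∈ range N, f n * coeff n (multichooseSeries (β : ℂ) * ψ) := by
        rw [sum_range_weylSum_mul hf]
        simp only [cesConv_eq_coeff hβ, PowerSeries.mk_coeff]
    _ = ∑ n ∈ range N, f n * g n := by simp only [hψ, coeff_mk]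

end EventuallyZero

theorem stmt6 (f g : ℕ → ℂ) (hf : (Function.support f).Finite)
    (hg : (Function.support g).Finite) (α : ℝ) (hα : 0 < α) :
    (∑ᶠ n : ℕ, weylSum α f n * g n) = (∑ᶠ n : ℕ, f n * cesConv α g n) ∧
    (∑ᶠ n : ℕ, f n * g n) = (∑ᶠ n : ℕ, weylDiff α f n * cesConv α g n) ∧
    (∑ᶠ n : ℕ, f n * g n) = (∑ᶠ n : ℕ, cesConv α f n * weylDiff α g n) := by
  obtain ⟨N₁, hN₁⟩ := exists_forall_le_eq_zero hf
  obtain ⟨N₂, hN₂⟩ := exists_forall_le_eq_zero hg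
  set N := max N₁ N₂
  have hfN : ∀ n, N ≤ n → f n = 0 := fun n hn => hN₁ n (le_of_max_le_left hn)
  have hgN : ∀ n, N ≤ n → g n = 0 := fun n hn => hN₂ n (le_of_max_le_right hn)
  have finsum_eq {u v : ℕ → ℂ} (h : ∀ n, N ≤ n → u n = 0 ∨ v n = 0) :
      ∑ᶠ n, u n * v n = ∑ n ∈ range N, u n * v n :=
    finsum_eq_sum_range_of_eq_zero fun n hn => mul_eq_zero.mpr (h n hn)
  have hfg : ∑ᶠ n, f n * g n = ∑ n ∈ range N, f n * g n :=
    finsum_eq fun n hn => .inl (hfN n hn)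
  refine ⟨?_, ?_, ?_⟩
  · rw [finsum_eq fun n hn => .inl (weylSum_eq_zero_of_le hfN α n hn),
      finsum_eq fun n hn => .inl (hfN n hn), sum_range_weylSum_mul hfN]
  · rw [hfg, finsum_eq fun n hn => .inl (weylDiff_eq_zero_of_le hfN α n hn),
      sum_range_weylDiff_mul_cesConv hfN hα]
  · rw [hfg, finsum_eq fun n hn => .inr (weylDiff_eq_zero_of_le hgN α n hn)]
    simp only [mul_comm (cesConv α f _), sum_range_weylDiff_mul_cesConv hgN hα, mul_comm (g _)]
end

section
/- Let α > 0, X a complex Banach space and (T_n)_{n∈ℕ₀} a sequence of bounded linear operators on X. Then the following are equivalent: (i) T_n = ∑_{j=0}^n k^α(n-j)·(T_1 − α·I)^j for all n ∈ ℕ₀; (ii) T_0 = I and the functional equation T_n T_m = ∑_{u=m}^{n+m} k^α(n+m-u)·T_u − ∑_{u=0}^{n-1} k^α(n+m-u)·T_u holds for all n ≥ 1 and m ∈ ℕ₀. -/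
/-!
Only `k^α(0) = 1` and `k^α(1) = α` matter. For any kernel `k` with `k 0 = 1` and any element `S`
of an algebra, the sums `A n = ∑_{j ≤ n} k (n - j) • S ^ j` are characterised by `A 0 = 1` and
`A (n + 1) = S * A n + k (n + 1) • 1`. The functional equation with `n = 1` is exactly this
recurrence for `S = T 1 - k 1 • 1`. Conversely the recurrence gives the functional equation by
induction on `n` (already true for `n = 0`), once the scalar terms are cancelled by
`∑_{i ≤ n} k (n - i) k (m + i + 1) = k (n + m + 1) + ∑_{u < n} k (n + m - u) k (u + 1)`,
a reindexing that isolates the term `k 0 = 1`.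
-/

open Finset

lemma cesK_zero {α : ℝ} (hα : 0 < α) : cesK α 0 = 1 := by
  simp [cesK, (Real.Gamma_pos_of_pos hα).ne']

lemma cesK_one {α : ℝ} (hα : 0 < α) : cesK α 1 = α := by
  rw [cesK, Nat.cast_one, add_comm, Real.Gamma_add_one hα.ne', one_add_one_eq_two, Real.Gamma_two,
    mul_one, mul_div_cancel_right₀ _ (Real.Gamma_pos_of_pos hα).ne']

lemma sum_range_mul_add_succ {R : Type*} [CommSemiring R] {k : ℕ → R} (hk0 : k 0 = 1)
    (n m : ℕ) :
    ∑ i ∈ range (n + 1), k (n - i) * k (m + i + 1)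
      = k (n + m + 1) + ∑ u ∈ range n, k (n + m - u) * k (u + 1) := by
  rw [sum_range_succ, Nat.sub_self, hk0, one_mul, add_comm, Nat.add_comm m n,
    ← sum_range_reflect (fun u => k (n + m - u) * k (u + 1))]
  congr 1
  refine sum_congr rfl fun i hi => ?_
  have hi : i < n := mem_range.mp hi
  rw [mul_comm, show n + m - (n - 1 - i) = m + i + 1 by omega, show n - 1 - i + 1 = n - i by omega]

section CesaroSum

variable {R A : Type*} [CommRing R] [Ring A] [Algebra R A] {k : ℕ → R} {S : A}

variable (k S) in
def cesaroSum (n : ℕ) : A :=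
  ∑ j ∈ range (n + 1), k (n - j) • S ^ j

lemma cesaroSum_zero (hk0 : k 0 = 1) : cesaroSum k S 0 = 1 := by
  simp [cesaroSum, hk0]

lemma cesaroSum_succ (n : ℕ) : cesaroSum k S (n + 1) = S * cesaroSum k S n + k (n + 1) • 1 := by
  rw [cesaroSum, cesaroSum, sum_range_succ', mul_sum, pow_zero, Nat.sub_zero]
  congr 1
  refine sum_congr rfl fun j _ => ?_
  rw [Nat.add_sub_add_right, pow_succ', mul_smul_comm]

lemma mul_cesaroSum (n : ℕ) : S * cesaroSum k S n = cesaroSum k S (n + 1) - k (n + 1) • 1 := by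
  rw [cesaroSum_succ, add_sub_cancel_right]

lemma eq_cesaroSum_of_succ {T : ℕ → A} (hk0 : k 0 = 1) (h0 : T 0 = 1)
    (hsucc : ∀ n, T (n + 1) = S * T n + k (n + 1) • 1) (n : ℕ) : T n = cesaroSum k S n := by
  induction n with
  | zero => rw [h0, cesaroSum_zero hk0]
  | succ n ih => rw [hsucc, ih, cesaroSum_succ]

lemma cesaroSum_mul_cesaroSum (hk0 : k 0 = 1) (n m : ℕ) :
    cesaroSum k S n * cesaroSum k S m
      = ∑ i ∈ range (n + 1), k (n - i) • cesaroSum k S (m + i)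
        - ∑ u ∈ range n, k (n + m - u) • cesaroSum k S u := by
  induction n with
  | zero => simp [cesaroSum_zero hk0, hk0]
  | succ n ih =>
    calc cesaroSum k S (n + 1) * cesaroSum k S m
        = S * (cesaroSum k S n * cesaroSum k S m) + k (n + 1) • cesaroSum k S m := by
          rw [cesaroSum_succ, add_mul, mul_assoc, smul_mul_assoc, one_mul]
      _ = (∑ i ∈ range (n + 1), k (n - i) • cesaroSum k S (m + i + 1)
            - ∑ u ∈ range n, k (n + m - u) • cesaroSum k S (u + 1))
          - (∑ i ∈ range (n + 1), k (n - i) * k (m + i + 1)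
            - ∑ u ∈ range n, k (n + m - u) * k (u + 1)) • 1
          + k (n + 1) • cesaroSum k S m := by
          rw [ih, mul_sub, mul_sum, mul_sum, sub_smul, sum_smul, sum_smul]
          simp_rw [mul_smul_comm, mul_cesaroSum, smul_sub, smul_smul, sum_sub_distrib]
          abel
      _ = ∑ i ∈ range (n + 1 + 1), k (n + 1 - i) • cesaroSum k S (m + i)
            - ∑ u ∈ range (n + 1), k (n + 1 + m - u) • cesaroSum k S u := by
          rw [sum_range_mul_add_succ hk0, add_sub_cancel_right,
            sum_range_succ' (fun i => k (n + 1 - i) • cesaroSum k S (m + i)),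
            sum_range_succ' (fun u => k (n + 1 + m - u) • cesaroSum k S u)]
          simp only [Nat.add_sub_add_right, Nat.sub_zero, add_zero, cesaroSum_zero hk0,
            ← add_assoc, Nat.add_right_comm n 1 m]
          abel

theorem forall_eq_cesaroSum_iff (hk0 : k 0 = 1) (T : ℕ → A) :
    (∀ n, T n = cesaroSum k (T 1 - k 1 • 1) n) ↔
      (T 0 = 1 ∧ ∀ n m, 1 ≤ n →
        T n * T m = ∑ i ∈ range (n + 1), k (n - i) • T (m + i)
          - ∑ u ∈ range n, k (n + m - u) • T u) := by
  constructor
  · intro hT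
    obtain ⟨S, rfl⟩ : ∃ S, T = cesaroSum k S := ⟨_, funext hT⟩
    exact ⟨cesaroSum_zero hk0, fun n m _ => cesaroSum_mul_cesaroSum hk0 n m⟩
  · rintro ⟨h0, hmul⟩
    refine eq_cesaroSum_of_succ hk0 h0 fun m => ?_
    have h := hmul 1 m le_rfl
    simp only [sum_range_succ, sum_range_zero, zero_add, Nat.sub_zero, Nat.sub_self, add_zero,
      hk0, one_smul, h0, add_comm 1 m] at h
    rw [sub_mul, h, smul_mul_assoc, one_mul]
    abel

end CesaroSum

lemma sum_Icc_sub_eq_sum_range {M : Type*} [AddCommMonoid M] (f : ℕ → ℕ → M) (n m : ℕ) :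
    ∑ u ∈ Icc m (n + m), f (n + m - u) u = ∑ i ∈ range (n + 1), f (n - i) (m + i) := by
  rw [← Ico_add_one_right_eq_Icc, sum_Ico_eq_sum_range, Nat.add_right_comm, Nat.add_sub_cancel]
  exact sum_congr rfl fun i _ => by rw [Nat.add_comm m i, Nat.add_sub_add_right]

theorem stmt14_general {X : Type*} [NormedAddCommGroup X] [NormedSpace ℂ X]
    (α : ℝ) (hα : 0 < α) (T : ℕ → X →L[ℂ] X) :
    (∀ n : ℕ, T n =
        ∑ j ∈ Finset.range (n + 1),
          (cesK α (n - j) : ℂ) • (T 1 - (α : ℂ) • (1 : X →L[ℂ] X)) ^ j) ↔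
      (T 0 = 1 ∧ ∀ n m : ℕ, 1 ≤ n →
        T n * T m =
          (∑ u ∈ Finset.Icc m (n + m), (cesK α (n + m - u) : ℂ) • T u) -
            ∑ u ∈ Finset.range n, (cesK α (n + m - u) : ℂ) • T u) := by
  have h := forall_eq_cesaroSum_iff (k := fun n => (cesK α n : ℂ)) (by simp [cesK_zero hα]) T
  simp only [cesaroSum, cesK_one hα] at h
  simpa only [sum_Icc_sub_eq_sum_range (fun i u => (cesK α i : ℂ) • T u)] using h

theorem stmt14 {X : Type*} [NormedAddCommGroup X] [NormedSpace ℂ X] [CompleteSpace X]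
    (α : ℝ) (hα : 0 < α) (T : ℕ → X →L[ℂ] X) :
    (∀ n : ℕ, T n =
        ∑ j ∈ Finset.range (n + 1),
          (cesK α (n - j) : ℂ) • (T 1 - (α : ℂ) • (1 : X →L[ℂ] X)) ^ j) ↔
      (T 0 = 1 ∧ ∀ n m : ℕ, 1 ≤ n →
        T n * T m =
          (∑ u ∈ Finset.Icc m (n + m), (cesK α (n + m - u) : ℂ) • T u) -
            ∑ u ∈ Finset.range n, (cesK α (n + m - u) : ℂ) • T u) :=
  stmt14_general α hα T
end
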